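/- Let L be the Laplacian of a strongly connected weighted directed graph on M nodes (so ker L = span{𝟏_M}). If y : ℝ≥0 → (ℝ^p)^M satisfies (L ⊗ I_p)y(t) → 0 as t → ∞, then y_a(t) - y_b(t) → 0 for all nodes a, b. -/

import Mathlib

/-!
Since `ker L = span{𝟏}` lies in the kernel of `x ↦ x a - x b`, this functional factors linearly
through `L`: `x a - x b = φ (L x)`. On a finite-dimensional space `φ` is continuous, so applying it
coordinatewise (in `Fin p`) to `L y(t) → 0` gives `y a(t) - y b(t) → 0`.
-/

open Filter Matrix
open scoped NNReal Topology

theorem LinearMap.exists_comp_eq_of_ker_le {K V V' W : Type*} [DivisionRing K]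
    [AddCommGroup V] [Module K V] [AddCommGroup V'] [Module K V'] [AddCommGroup W] [Module K W]
    {f : V →ₗ[K] V'} {g : V →ₗ[K] W} (h : ker f ≤ ker g) : ∃ φ : V' →ₗ[K] W, φ ∘ₗ f = g := by
  obtain ⟨S, hS⟩ := ((ker f).liftQ f le_rfl).exists_leftInverse_of_injective
    (Submodule.ker_liftQ_eq_bot _ _ _ le_rfl)
  refine ⟨(ker f).liftQ g h ∘ₗ S, LinearMap.ext fun x => ?_⟩
  have hx : S (f x) = (ker f).mkQ x := LinearMap.congr_fun hS ((ker f).mkQ x)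
  simp [hx]

theorem LinearMap.tendsto_zero_of_ker_le {𝕜 E F G ι : Type*} [NontriviallyNormedField 𝕜]
    [CompleteSpace 𝕜] [AddCommGroup E] [Module 𝕜 E] [NormedAddCommGroup F] [NormedSpace 𝕜 F]
    [FiniteDimensional 𝕜 F] [NormedAddCommGroup G] [NormedSpace 𝕜 G]
    {f : E →ₗ[𝕜] F} {g : E →ₗ[𝕜] G} (h : ker f ≤ ker g) {l : Filter ι} {x : ι → E}
    (hx : Tendsto (fun i => f (x i)) l (𝓝 0)) : Tendsto (fun i => g (x i)) l (𝓝 0) := by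
  obtain ⟨φ, rfl⟩ := exists_comp_eq_of_ker_le h
  simpa [Function.comp_def] using (φ.continuous_of_finiteDimensional.tendsto 0).comp hx

theorem stmt_14_general {Mn p : ℕ} (L : Matrix (Fin Mn) (Fin Mn) ℝ)
    (hker : LinearMap.ker (Matrix.toLin' L) =
      Submodule.span ℝ {(fun _ => 1 : Fin Mn → ℝ)})
    (y : ℝ≥0 → Fin Mn → Fin p → ℝ)
    (hweak : ∀ i, Tendsto (fun t => ∑ j, L i j • y t j) atTop (𝓝 0)) :
    ∀ a b, Tendsto (fun t => y t a - y t b) atTop (𝓝 0) := by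
  intro a b
  have hsync : LinearMap.ker (Matrix.toLin' L) ≤
      LinearMap.ker (LinearMap.proj (R := ℝ) (φ := fun _ : Fin Mn => ℝ) a - LinearMap.proj b) := by
    rw [hker, Submodule.span_singleton_le_iff_mem]
    simp
  refine tendsto_pi_nhds.2 fun k => ?_
  have hL : Tendsto (fun t => Matrix.toLin' L (fun i => y t i k)) atTop (𝓝 0) := by
    refine tendsto_pi_nhds.2 fun i => ?_
    simpa [Matrix.mulVec, dotProduct] using tendsto_pi_nhds.1 (hweak i) k
  simpa using LinearMap.tendsto_zero_of_ker_le hsync hL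

/-- For the Laplacian of a strongly connected weighted digraph (so that
`ker L = span{𝟏}`), weak synchronization `(L ⊗ I_p) y(t) → 0` implies pairwise
output synchronization. -/
theorem stmt_14 {Mn p : ℕ} (L : Matrix (Fin Mn) (Fin Mn) ℝ)
    (hoff : ∀ i j, i ≠ j → L i j ≤ 0)
    (hrow : ∀ i, ∑ j, L i j = 0)
    (hker : LinearMap.ker (Matrix.toLin' L) =
      Submodule.span ℝ {(fun _ => 1 : Fin Mn → ℝ)})
    (y : ℝ≥0 → Fin Mn → Fin p → ℝ)
    (hweak : ∀ i, Tendsto (fun t => ∑ j, L i j • y t j) atTop (𝓝 0)) :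
    ∀ a b, Tendsto (fun t => y t a - y t b) atTop (𝓝 0) :=
  stmt_14_general L hker y hweak
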